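/- arXiv:1603.06135 — 2 statements merged into one kernel-verified Lean document; each statement's English description precedes it below -/
import Mathlib

section
/- Let a be a real number and let f_a : ℝ → ℝ be defined by f_a(x) = 1/((1+(x−a)²)·(1+(x+a)²)). Then f_a is twice differentiable and its second derivative at 0 equals f_a''(0) = 4(a²−1)/(1+a²)⁴; in particular f_a''(0) < 0 if and only if |a| < 1, f_a''(0) = 0 if and only if |a| = 1, and f_a''(0) > 0 if and only if |a| > 1. -/
open Filter Topology

/-!
The denominator of `f_a` equals `(1 + a² + x²)² - 4a²x²`, so `f_a(x) = h(x²)` with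
`h(t) = 1 / p(t)`, `p(t) = (1 + a² + t)² - 4a²t`. For `h` of class `C²` at `0`,
`(x ↦ h(x²))''(0) = 2 h'(0)`, and `h'(0) = -p'(0) / p(0)² = -2(1 - a²) / (1 + a²)⁴`.
-/

theorem deriv_deriv_comp_sq_zero {𝕜 : Type*} [NontriviallyNormedField 𝕜] {h : 𝕜 → 𝕜}
    (hh : ContDiffAt 𝕜 2 h 0) :
    deriv (deriv fun x => h (x ^ 2)) 0 = 2 * deriv h 0 := by
  have hsq : Tendsto (fun x : 𝕜 => x ^ 2) (𝓝 0) (𝓝 0) :=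
    (continuous_pow 2).tendsto' 0 0 (zero_pow two_ne_zero)
  have hderiv : deriv (fun x => h (x ^ 2)) =ᶠ[𝓝 0] fun x => deriv h (x ^ 2) * (2 * x) := by
    filter_upwards [hsq.eventually (hh.eventually (by simp))] with x hx
    exact (((hx.differentiableAt two_ne_zero).hasDerivAt.comp (h := fun x : 𝕜 => x ^ 2) x
      (hasDerivAt_pow 2 x)).congr_deriv (by norm_num)).deriv
  have hderiv_sq : HasDerivAt (fun x => deriv h (x ^ 2)) (deriv (deriv h) 0 * (2 * 0)) 0 :=
    ((hh.derivWithin (m := 1) le_rfl).differentiableAt one_ne_zero).hasDerivAt.comp_of_eq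
      (h := fun x : 𝕜 => x ^ 2) 0 (by simpa using hasDerivAt_pow 2 (0 : 𝕜)) (by simp)
  have hprod : HasDerivAt (fun x => deriv h (x ^ 2) * (2 * x)) (2 * deriv h 0) 0 :=
    (hderiv_sq.mul ((hasDerivAt_id' 0).const_mul 2)).congr_deriv (by simp; ring)
  rw [hderiv.deriv_eq, hprod.deriv]

theorem one_add_sub_sq_mul_one_add_add_sq (a x : ℝ) :
    (1 + (x - a) ^ 2) * (1 + (x + a) ^ 2) = (1 + a ^ 2 + x ^ 2) ^ 2 - 4 * a ^ 2 * x ^ 2 := by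
  ring

theorem deriv_one_div_cauchy_denom_zero (a : ℝ) :
    deriv (fun t : ℝ => 1 / ((1 + a ^ 2 + t) ^ 2 - 4 * a ^ 2 * t)) 0 =
      -2 * (1 - a ^ 2) / (1 + a ^ 2) ^ 4 := by
  have hp : HasDerivAt (fun t : ℝ => (1 + a ^ 2 + t) ^ 2 - 4 * a ^ 2 * t)
      (2 * (1 + a ^ 2) - 4 * a ^ 2) 0 :=
    ((((hasDerivAt_id' 0).const_add (1 + a ^ 2)).pow 2).sub
      ((hasDerivAt_id' 0).const_mul (4 * a ^ 2))).congr_deriv (by norm_num)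
  have hp0 : (1 + a ^ 2 + 0) ^ 2 - 4 * a ^ 2 * 0 ≠ 0 := by norm_num; positivity
  have hq : HasDerivAt (fun t : ℝ => 1 / ((1 + a ^ 2 + t) ^ 2 - 4 * a ^ 2 * t))
      (-2 * (1 - a ^ 2) / (1 + a ^ 2) ^ 4) 0 :=
    ((hasDerivAt_const 0 1).div hp hp0).congr_deriv (by field_simp; ring)
  exact hq.deriv

theorem cauchy_second_deriv_sign (a : ℝ) :
    (4 * (a ^ 2 - 1) / (1 + a ^ 2) ^ 4 < 0 ↔ |a| < 1) ∧
    (4 * (a ^ 2 - 1) / (1 + a ^ 2) ^ 4 = 0 ↔ |a| = 1) ∧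
    (0 < 4 * (a ^ 2 - 1) / (1 + a ^ 2) ^ 4 ↔ 1 < |a|) := by
  have hd : 0 < (1 + a ^ 2) ^ 4 := by positivity
  rw [div_lt_iff₀ hd, div_eq_zero_iff, lt_div_iff₀ hd, ← sq_lt_one_iff_abs_lt_one,
    ← one_lt_sq_iff_one_lt_abs, ← pow_left_inj₀ (abs_nonneg a) zero_le_one two_ne_zero, sq_abs]
  refine ⟨by constructor <;> intro <;> linarith, ?_, by constructor <;> intro <;> linarith⟩
  simp only [hd.ne', or_false, one_pow]
  constructor <;> intro <;> linarith

/-- For the Cauchy conditional density `f_a(x) = 1/((1+(x-a)²)(1+(x+a)²))`,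
`f_a` is twice differentiable, `f_a''(0) = 4(a²-1)/(1+a²)⁴`, and the sign of
`f_a''(0)` is determined by the position of `|a|` relative to `1`. -/
theorem cauchy_conditional_density_second_deriv_at_zero (a : ℝ) (f : ℝ → ℝ)
    (hf : f = fun x : ℝ => 1 / ((1 + (x - a) ^ 2) * (1 + (x + a) ^ 2))) :
    (Differentiable ℝ f ∧ Differentiable ℝ (deriv f)) ∧
    deriv (deriv f) 0 = 4 * (a ^ 2 - 1) / (1 + a ^ 2) ^ 4 ∧
    (deriv (deriv f) 0 < 0 ↔ |a| < 1) ∧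
    (deriv (deriv f) 0 = 0 ↔ |a| = 1) ∧
    (0 < deriv (deriv f) 0 ↔ 1 < |a|) := by
  have hsmooth : ContDiff ℝ 2 f := by
    rw [hf]
    exact contDiff_const.div (by fun_prop) fun x => by positivity
  have heven : f = fun x => (fun t => 1 / ((1 + a ^ 2 + t) ^ 2 - 4 * a ^ 2 * t)) (x ^ 2) := by
    simp only [hf, one_add_sub_sq_mul_one_add_add_sq]
  have hval : deriv (deriv f) 0 = 4 * (a ^ 2 - 1) / (1 + a ^ 2) ^ 4 := by
    have hh : ContDiffAt ℝ 2 (fun t : ℝ => 1 / ((1 + a ^ 2 + t) ^ 2 - 4 * a ^ 2 * t)) 0 :=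
      contDiffAt_const.div (by fun_prop) (by norm_num; positivity)
    rw [heven, deriv_deriv_comp_sq_zero hh, deriv_one_div_cauchy_denom_zero]
    ring
  rw [hval]
  exact ⟨⟨hsmooth.differentiable two_ne_zero, hsmooth.differentiable_deriv_two⟩, rfl,
    cauchy_second_deriv_sign a⟩
end

section
/- Let γ > 0 and let μ_γ denote the probability measure on ℝ with density x ↦ γ/(π(γ²+x²)) with respect to Lebesgue measure. Then for every real t, the characteristic function of μ_γ satisfies ∫_ℝ exp(i·t·x) dμ_γ(x) = exp(−γ·|t|). -/
/-!
The Cauchy density is, after the rescaling `y = 2πw` and up to the factor `1/(2π)`, the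
Fourier transform of the Laplace function `exp(-γ|x|)`: splitting at `0`, that transform is
`1/(γ + 2πiw) + 1/(γ - 2πiw) = 2γ/(γ² + (2πw)²)`. Both functions are integrable and
`exp(-γ|x|)` is continuous, so Fourier inversion turns the characteristic-function integral
back into `exp(-γ|t|)`.
-/

open MeasureTheory

noncomputable def cauchyMeasure (γ : ℝ) : Measure ℝ :=
  volume.withDensity fun x : ℝ => ENNReal.ofReal (γ / (Real.pi * (γ ^ 2 + x ^ 2)))

open Complex Set Real FourierTransform

section Laplace

variable {γ : ℝ}

lemma exp_I_mul_mul_exp_neg_mul_abs_eqOn_Ioi (s : ℝ) :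
    EqOn (fun x : ℝ => cexp (I * s * x) * cexp (-(γ * |x|)))
      (fun x : ℝ => cexp ((I * s - γ) * x)) (Ioi 0) := by
  intro x hx
  simp only [abs_of_pos (mem_Ioi.mp hx), ← Complex.exp_add]
  congr 1
  ring

lemma exp_I_mul_mul_exp_neg_mul_abs_eqOn_Iic (s : ℝ) :
    EqOn (fun x : ℝ => cexp (I * s * x) * cexp (-(γ * |x|)))
      (fun x : ℝ => cexp ((I * s + γ) * x)) (Iic 0) := by
  intro x hx
  simp only [abs_of_nonpos (mem_Iic.mp hx), ← Complex.exp_add]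
  congr 1
  push_cast
  ring

lemma integrable_exp_I_mul_mul_exp_neg_mul_abs (hγ : 0 < γ) (s : ℝ) :
    Integrable fun x : ℝ => cexp (I * s * x) * cexp (-(γ * |x|)) := by
  rw [← integrableOn_univ, ← Iic_union_Ioi (a := 0)]
  exact ((integrableOn_exp_mul_complex_Iic (by simpa using hγ) 0).congr_fun
      (exp_I_mul_mul_exp_neg_mul_abs_eqOn_Iic s).symm measurableSet_Iic).union
    ((integrableOn_exp_mul_complex_Ioi (by simpa using hγ) 0).congr_fun
      (exp_I_mul_mul_exp_neg_mul_abs_eqOn_Ioi s).symm measurableSet_Ioi)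

lemma integrable_exp_neg_mul_abs (hγ : 0 < γ) :
    Integrable fun x : ℝ => cexp (-(γ * |x|)) := by
  simpa using integrable_exp_I_mul_mul_exp_neg_mul_abs hγ 0

lemma integral_exp_I_mul_mul_exp_neg_mul_abs (hγ : 0 < γ) (s : ℝ) :
    ∫ x : ℝ, cexp (I * s * x) * cexp (-(γ * |x|)) = 2 * γ / (γ ^ 2 + s ^ 2) := by
  have hre_neg : (I * s - γ).re < 0 := by simpa using hγ
  have hre_pos : 0 < (I * s + γ).re := by simpa using hγ
  have hne_neg : I * s - γ ≠ 0 := fun h => by simp [h] at hre_neg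
  have hne_pos : I * s + γ ≠ 0 := ne_zero_of_re_pos hre_pos
  have hprod : (γ : ℂ) ^ 2 + s ^ 2 = -((I * s - γ) * (I * s + γ)) := by
    linear_combination (s : ℂ) ^ 2 * I_sq
  have hint := integrable_exp_I_mul_mul_exp_neg_mul_abs hγ s
  rw [← intervalIntegral.integral_Iic_add_Ioi hint.integrableOn hint.integrableOn,
    setIntegral_congr_fun measurableSet_Iic (exp_I_mul_mul_exp_neg_mul_abs_eqOn_Iic s),
    setIntegral_congr_fun measurableSet_Ioi (exp_I_mul_mul_exp_neg_mul_abs_eqOn_Ioi s),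
    integral_exp_mul_complex_Iic hre_pos, integral_exp_mul_complex_Ioi hre_neg, hprod]
  simp only [ofReal_zero, mul_zero, Complex.exp_zero]
  field_simp
  ring

lemma fourier_exp_neg_mul_abs (hγ : 0 < γ) (w : ℝ) :
    𝓕 (fun x : ℝ => cexp (-(γ * |x|))) w = 2 * γ / (γ ^ 2 + (2 * π * w) ^ 2) := by
  rw [Real.fourier_real_eq_integral_exp_smul]
  simp_rw [smul_eq_mul]
  convert integral_exp_I_mul_mul_exp_neg_mul_abs hγ (-(2 * π * w)) using 1
  · congr 1 with x
    congr 2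
    push_cast
    ring
  · push_cast
    ring

lemma integrable_fourier_exp_neg_mul_abs (hγ : 0 < γ) :
    Integrable (𝓕 fun x : ℝ => cexp (-(γ * |x|))) := by
  have hcauchy : Integrable fun s : ℝ => 2 * γ⁻¹ * (1 + (s / γ) ^ 2)⁻¹ :=
    (integrable_inv_one_add_sq.comp_div hγ.ne').const_mul _
  refine (hcauchy.comp_mul_left' (by positivity : 2 * π ≠ 0)).ofReal.congr
    (.of_forall fun w => ?_)
  have hreal :
      2 * γ⁻¹ * (1 + (2 * π * w / γ) ^ 2)⁻¹ = 2 * γ / (γ ^ 2 + (2 * π * w) ^ 2) := by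
    field_simp
  simp [fourier_exp_neg_mul_abs hγ, hreal]

lemma cauchy_density_eq_fourier_exp_neg_mul_abs (hγ : 0 < γ) (y : ℝ) :
    ((γ / (π * (γ ^ 2 + y ^ 2)) : ℝ) : ℂ) =
      (2 * π : ℂ)⁻¹ * 𝓕 (fun x : ℝ => cexp (-(γ * |x|))) (y / (2 * π)) := by
  have hreal : γ / (π * (γ ^ 2 + y ^ 2)) =
      (2 * π)⁻¹ * (2 * γ / (γ ^ 2 + (2 * π * (y / (2 * π))) ^ 2)) := by
    field_simp
  simp [fourier_exp_neg_mul_abs hγ, hreal]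

end Laplace

lemma MeasureTheory.Integrable.integral_exp_I_mul_fourier_div_two_pi {g : ℝ → ℂ}
    (hg : Integrable g) (hFg : Integrable (𝓕 g)) {t : ℝ} (ht : ContinuousAt g t) :
    ∫ y : ℝ, cexp (I * t * y) * 𝓕 g (y / (2 * π)) = 2 * π * g t := by
  calc ∫ y : ℝ, cexp (I * t * y) * 𝓕 g (y / (2 * π))
      = ∫ y : ℝ, cexp (↑(2 * π * (y / (2 * π) * t)) * I) * 𝓕 g (y / (2 * π)) := by
        congr 1 with y
        congr 2
        push_cast
        field_simp
    _ = 2 * π * 𝓕⁻ (𝓕 g) t := by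
        rw [Measure.integral_comp_div (fun w => cexp (↑(2 * π * (w * t)) * I) * 𝓕 g w),
          abs_of_pos two_pi_pos, Real.fourierInv_eq']
        simp [mul_comm]
    _ = 2 * π * g t := by rw [hg.fourierInv_fourier_eq hFg ht]

lemma integral_cauchyMeasure {E : Type*} [NormedAddCommGroup E] [NormedSpace ℝ E] {γ : ℝ}
    (hγ : 0 ≤ γ) (f : ℝ → E) :
    ∫ x, f x ∂cauchyMeasure γ = ∫ x, (γ / (π * (γ ^ 2 + x ^ 2))) • f x := by
  rw [cauchyMeasure, integral_withDensity_eq_integral_toReal_smul (by fun_prop)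
    (.of_forall fun _ => ENNReal.ofReal_lt_top)]
  congr 1 with x
  rw [ENNReal.toReal_ofReal (by positivity)]

/-- The characteristic function of the Cauchy distribution with scale `γ` is
`t ↦ exp(-γ|t|)`. -/
theorem cauchy_characteristic_function (γ : ℝ) (hγ : 0 < γ) (t : ℝ) :
    ∫ x : ℝ, Complex.exp (Complex.I * t * x) ∂(cauchyMeasure γ) =
      Complex.exp (-(γ * |t|)) := by
  have h2π : (2 * π : ℂ) ≠ 0 := by exact_mod_cast two_pi_pos.ne'
  calc ∫ x : ℝ, cexp (I * t * x) ∂cauchyMeasure γ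
      = ∫ y : ℝ, (2 * π : ℂ)⁻¹ *
          (cexp (I * t * y) * 𝓕 (fun x : ℝ => cexp (-(γ * |x|))) (y / (2 * π))) := by
        rw [integral_cauchyMeasure hγ.le]
        congr 1 with y
        rw [Complex.real_smul, cauchy_density_eq_fourier_exp_neg_mul_abs hγ]
        ring
    _ = cexp (-(γ * |t|)) := by
        rw [integral_const_mul,
          (integrable_exp_neg_mul_abs hγ).integral_exp_I_mul_fourier_div_two_pi
            (integrable_fourier_exp_neg_mul_abs hγ) (by fun_prop),
          inv_mul_cancel_left₀ h2π]
end
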